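/- arXiv:1605.01877 — 7 statements merged into one kernel-verified Lean document; each statement's English description precedes it below -/
import Mathlib

section
/- The Siegel domain coordinates compute the norm of the representative vector: for all τ ∈ ℂ and σ ∈ W, one has ⟨z(τ,σ), z(τ,σ)⟩ = 2·Im(τ)·|δ|·|⟨ℓ',ℓ⟩|² + ⟨σ,σ⟩. Consequently ⟨z(τ,σ), z(τ,σ)⟩ > 0 if and only if 2·Im(τ)·|δ|·|⟨ℓ',ℓ⟩|² > −⟨σ,σ⟩, i.e. if and only if (τ,σ) lies in the generalized upper half-plane H_{ℓ,ℓ'}. -/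
open Complex

/-- The representative vector `z(τ,σ) = ℓ' − δτ⟨ℓ',ℓ⟩ℓ + σ` of the Siegel domain
coordinates `(τ,σ)`. -/
noncomputable def zcoord {V : Type*} [AddCommGroup V] [Module ℂ V]
    (B : V →ₗ[ℂ] V →ₛₗ[starRingEnd ℂ] ℂ) (δ : ℂ) (ℓ ℓ' : V) (τ : ℂ) (σ : V) : V :=
  ℓ' - (δ * τ * B ℓ' ℓ) • ℓ + σ

/-! Since `ℓ` and `ℓ'` are isotropic and `σ` is orthogonal to both, the only cross terms
surviving in `⟨z,z⟩` are `a⟨ℓ,ℓ'⟩` and its conjugate, with `a = δτ⟨ℓ',ℓ⟩`; they add up to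
`−2 Re(δτ)|⟨ℓ',ℓ⟩|²`, and `Re(δτ) = −|δ| Im τ` because `δ` is purely imaginary. -/

open scoped ComplexConjugate

namespace LinearMap

variable {V : Type*} [AddCommGroup V] [Module ℂ V] {B : V →ₗ[ℂ] V →ₛₗ[starRingEnd ℂ] ℂ}

theorem isRefl_of_apply_swap_eq_conj (hB : ∀ v w, B w v = conj (B v w)) : B.IsRefl :=
  fun v w h => by rw [hB, h, map_zero]

theorem apply_sub_smul_add_self_of_isotropic (hB : ∀ v w, B w v = conj (B v w))
    {ℓ ℓ' σ : V} (hℓ : B ℓ ℓ = 0) (hℓ' : B ℓ' ℓ' = 0) (hσℓ : B σ ℓ = 0) (hσℓ' : B σ ℓ' = 0)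
    (a : ℂ) :
    B (ℓ' - a • ℓ + σ) (ℓ' - a • ℓ + σ) = B σ σ - ((2 * (a * B ℓ ℓ').re : ℝ) : ℂ) := by
  have hrefl := isRefl_of_apply_swap_eq_conj hB
  simp only [map_add, map_sub, map_smul, map_smulₛₗ, add_apply, sub_apply, smul_apply,
    smul_eq_mul, hℓ, hℓ', hσℓ, hσℓ', hrefl.eq_zero hσℓ, hrefl.eq_zero hσℓ', hB ℓ ℓ']
  rw [← add_conj, map_mul]
  ring

end LinearMap

theorem Complex.re_mul_of_re_eq_zero {δ : ℂ} (hδ : δ.re = 0) (τ : ℂ) :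
    (δ * τ).re = -(δ.im * τ.im) := by
  simp [mul_re, hδ]

theorem siegel_norm_general {V : Type*} [AddCommGroup V] [Module ℂ V]
    (B : V →ₗ[ℂ] V →ₛₗ[starRingEnd ℂ] ℂ)
    (hherm : ∀ v w : V, B w v = starRingEnd ℂ (B v w))
    (δ : ℂ) (hδre : δ.re = 0)
    (ℓ ℓ' : V) (hℓ : B ℓ ℓ = 0) (hℓ' : B ℓ' ℓ' = 0)
    (τ : ℂ) (σ : V) (hσℓ : B σ ℓ = 0) (hσℓ' : B σ ℓ' = 0) :
    B (zcoord B δ ℓ ℓ' τ σ) (zcoord B δ ℓ ℓ' τ σ)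
        = ((2 * τ.im * δ.im * ‖B ℓ' ℓ‖ ^ 2 : ℝ) : ℂ) + B σ σ
      ∧ (0 < (B (zcoord B δ ℓ ℓ' τ σ) (zcoord B δ ℓ ℓ' τ σ)).re ↔
          2 * τ.im * δ.im * ‖B ℓ' ℓ‖ ^ 2 > -((B σ σ).re)) := by
  have hnorm : B (zcoord B δ ℓ ℓ' τ σ) (zcoord B δ ℓ ℓ' τ σ)
      = ((2 * τ.im * δ.im * ‖B ℓ' ℓ‖ ^ 2 : ℝ) : ℂ) + B σ σ := by
    rw [zcoord, B.apply_sub_smul_add_self_of_isotropic hherm hℓ hℓ' hσℓ hσℓ', hherm ℓ' ℓ,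
      mul_assoc, mul_conj', ← ofReal_pow, re_mul_ofReal, re_mul_of_re_eq_zero hδre]
    push_cast
    ring
  refine ⟨hnorm, ?_⟩
  rw [hnorm, add_re, ofReal_re, gt_iff_lt, neg_lt_iff_pos_add]

/-- The Siegel domain coordinates compute the norm of the representative vector:
`⟨z(τ,σ),z(τ,σ)⟩ = 2·Im τ·|δ|·|⟨ℓ',ℓ⟩|² + ⟨σ,σ⟩`, and consequently
`⟨z(τ,σ),z(τ,σ)⟩ > 0` iff `2·Im τ·|δ|·|⟨ℓ',ℓ⟩|² > −⟨σ,σ⟩`, i.e. iff `(τ,σ)`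
lies in the generalized upper half-plane. -/
theorem siegel_norm {V : Type*} [AddCommGroup V] [Module ℂ V]
    [FiniteDimensional ℂ V]
    (B : V →ₗ[ℂ] V →ₛₗ[starRingEnd ℂ] ℂ)
    (hherm : ∀ v w : V, B w v = starRingEnd ℂ (B v w))
    (δ : ℂ) (hδre : δ.re = 0) (hδim : 0 < δ.im)
    (ℓ ℓ' : V) (hℓ : B ℓ ℓ = 0) (hℓ' : B ℓ' ℓ' = 0) (hne : B ℓ ℓ' ≠ 0)
    (τ : ℂ) (σ : V) (hσℓ : B σ ℓ = 0) (hσℓ' : B σ ℓ' = 0) :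
    B (zcoord B δ ℓ ℓ' τ σ) (zcoord B δ ℓ ℓ' τ σ)
        = ((2 * τ.im * δ.im * ‖B ℓ' ℓ‖ ^ 2 : ℝ) : ℂ) + B σ σ
      ∧ (0 < (B (zcoord B δ ℓ ℓ' τ σ) (zcoord B δ ℓ ℓ' τ σ)).re ↔
          2 * τ.im * δ.im * ‖B ℓ' ℓ‖ ^ 2 > -((B σ σ).re)) :=
  siegel_norm_general B hherm δ hδre ℓ ℓ' hℓ hℓ' τ σ hσℓ hσℓ'
end

section
/- The Siegel domain is an affine model of the positive cone: assume in addition that the restriction of ⟨·,·⟩ to W is negative definite. Then every v ∈ V with ⟨v,v⟩ > 0 satisfies ⟨v,ℓ⟩ ≠ 0, and there exist unique c ∈ ℂ \ {0}, τ ∈ ℂ and σ ∈ W with v = c·z(τ,σ); moreover necessarily 2·Im(τ)·|δ|·|⟨ℓ',ℓ⟩|² > −⟨σ,σ⟩. -/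
open Complex

/-!
Pairing with `ℓ` and `ℓ'` reads off the coordinates: `⟨c·z(τ,σ), ℓ⟩ = c⟨ℓ',ℓ⟩` and
`⟨z(τ,σ), ℓ'⟩ = −δτ⟨ℓ',ℓ⟩⟨ℓ,ℓ'⟩`, so `c` and `τ` are determined by `v`, and then so is `σ`;
conversely these formulas produce `c, τ, σ` as soon as `⟨v,ℓ⟩ ≠ 0`. A positive `v` with
`⟨v,ℓ⟩ = 0` is impossible, since subtracting a multiple of `ℓ` moves it into `W` without
changing `⟨v,v⟩`. Finally `⟨z,z⟩ = ⟨σ,σ⟩ + 2·Im τ·|δ|·|⟨ℓ',ℓ⟩|²`, and `⟨v,v⟩ = |c|²⟨z,z⟩`.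
-/

namespace Siegel

variable {V : Type*} [AddCommGroup V] [Module ℂ V] (B : V →ₗ[ℂ] V →ₛₗ[starRingEnd ℂ] ℂ)
  {δ : ℂ} {ℓ ℓ' σ : V}

theorem zcoord_apply_ℓ (hℓ : B ℓ ℓ = 0) (hσℓ : B σ ℓ = 0) (τ : ℂ) :
    B (zcoord B δ ℓ ℓ' τ σ) ℓ = B ℓ' ℓ := by
  simp [zcoord, hℓ, hσℓ]

theorem zcoord_apply_ℓ' (hℓ' : B ℓ' ℓ' = 0) (hσℓ' : B σ ℓ' = 0) (τ : ℂ) :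
    B (zcoord B δ ℓ ℓ' τ σ) ℓ' = -(δ * τ * B ℓ' ℓ * B ℓ ℓ') := by
  simp [zcoord, hℓ', hσℓ', mul_assoc]

theorem re_zcoord_apply_self (hherm : ∀ v w : V, B w v = starRingEnd ℂ (B v w))
    (hδre : δ.re = 0) (hℓ : B ℓ ℓ = 0) (hℓ' : B ℓ' ℓ' = 0) (hσℓ : B σ ℓ = 0)
    (hσℓ' : B σ ℓ' = 0) (τ : ℂ) :
    (B (zcoord B δ ℓ ℓ' τ σ) (zcoord B δ ℓ ℓ' τ σ)).re
      = (B σ σ).re + 2 * τ.im * δ.im * ‖B ℓ' ℓ‖ ^ 2 := by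
  have hℓσ : B ℓ σ = 0 := by rw [hherm, hσℓ, map_zero]
  have hℓ'σ : B ℓ' σ = 0 := by rw [hherm, hσℓ', map_zero]
  have hℓℓ' : B ℓ ℓ' = starRingEnd ℂ (B ℓ' ℓ) := hherm ℓ' ℓ
  simp only [zcoord, map_add, map_sub, map_smul, map_smulₛₗ, LinearMap.add_apply,
    LinearMap.sub_apply, LinearMap.smul_apply, smul_eq_mul, hℓ, hℓ', hσℓ, hσℓ', hℓσ, hℓ'σ,
    hℓℓ']
  simp only [zero_sub, add_zero, map_mul, mul_zero, sub_zero, sub_self, zero_add, add_re, sub_re,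
    neg_re, mul_re, hδre, zero_mul, neg_mul, mul_im, conj_re, conj_im, mul_neg, sub_neg_eq_add,
    neg_add_rev, neg_neg, neg_zero, Complex.sq_norm, normSq_apply]
  ring

theorem re_apply_smul_self (c : ℂ) (x : V) : (B (c • x) (c • x)).re = normSq c * (B x x).re := by
  simp only [map_smul, map_smulₛₗ, LinearMap.smul_apply, smul_eq_mul]
  rw [← mul_assoc, mul_comm (starRingEnd ℂ c), Complex.mul_conj, re_ofReal_mul]

theorem apply_ne_zero_of_re_pos (hherm : ∀ v w : V, B w v = starRingEnd ℂ (B v w))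
    (hℓ : B ℓ ℓ = 0) (hne : B ℓ ℓ' ≠ 0)
    (hnegW : ∀ w : V, B w ℓ = 0 → B w ℓ' = 0 → w ≠ 0 → (B w w).re < 0)
    {v : V} (hv : 0 < (B v v).re) : B v ℓ ≠ 0 := by
  intro hvℓ
  set w := v - (B v ℓ' / B ℓ ℓ') • ℓ
  have hwℓ : B w ℓ = 0 := by simp [w, hℓ, hvℓ]
  have hwℓ' : B w ℓ' = 0 := by simp [w, hne]
  have hww : B w w = B v v := by
    have hℓv : B ℓ v = 0 := by rw [hherm, hvℓ, map_zero]
    simp [w, hℓ, hℓv, hvℓ]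
  have hw : w ≠ 0 := by
    rintro hw
    simp [← hww, hw] at hv
  linarith [hnegW w hwℓ hwℓ' hw, hww ▸ hv]

theorem exists_eq_smul_zcoord (hℓ : B ℓ ℓ = 0) (hℓ' : B ℓ' ℓ' = 0) (hK : B ℓ' ℓ ≠ 0)
    (hne : B ℓ ℓ' ≠ 0) (hδ : δ ≠ 0) {v : V} (hvℓ : B v ℓ ≠ 0) :
    ∃ (c τ : ℂ) (σ : V), c ≠ 0 ∧ B σ ℓ = 0 ∧ B σ ℓ' = 0 ∧ v = c • zcoord B δ ℓ ℓ' τ σ := by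
  set c := B v ℓ / B ℓ' ℓ
  have hc : c ≠ 0 := div_ne_zero hvℓ hK
  set u := c⁻¹ • v
  set τ := -B u ℓ' / (δ * B ℓ' ℓ * B ℓ ℓ')
  refine ⟨c, τ, u - ℓ' + (δ * τ * B ℓ' ℓ) • ℓ, hc, ?_, ?_, ?_⟩
  · simp [u, c, hℓ, hvℓ]
  · simp only [map_add, map_sub, map_smul, LinearMap.add_apply, LinearMap.sub_apply,
      LinearMap.smul_apply, smul_eq_mul, hℓ', τ]
    field_simp
    ring
  · simp [zcoord, u, hc]

theorem eq_of_smul_zcoord_eq (hℓ : B ℓ ℓ = 0) (hℓ' : B ℓ' ℓ' = 0) (hK : B ℓ' ℓ ≠ 0)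
    (hne : B ℓ ℓ' ≠ 0) (hδ : δ ≠ 0) {c c' τ τ' : ℂ} {σ' : V} (hc : c ≠ 0)
    (hσℓ : B σ ℓ = 0) (hσℓ' : B σ ℓ' = 0) (hσℓ₂ : B σ' ℓ = 0) (hσℓ₂' : B σ' ℓ' = 0)
    (h : c • zcoord B δ ℓ ℓ' τ σ = c' • zcoord B δ ℓ ℓ' τ' σ') :
    c = c' ∧ τ = τ' ∧ σ = σ' := by
  have hcc' : c = c' := by
    have := congrArg (B · ℓ) h
    simpa [zcoord_apply_ℓ B hℓ hσℓ, zcoord_apply_ℓ B hℓ hσℓ₂, hK] using this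
  subst hcc'
  have hz : zcoord B δ ℓ ℓ' τ σ = zcoord B δ ℓ ℓ' τ' σ' := smul_right_injective V hc h
  have hττ' : τ = τ' := by
    have := congrArg (B · ℓ') hz
    simpa [zcoord_apply_ℓ' B hℓ' hσℓ', zcoord_apply_ℓ' B hℓ' hσℓ₂', hK, hne, hδ]
      using this
  subst hττ'
  exact ⟨rfl, rfl, add_left_cancel hz⟩

end Siegel

open Siegel in
theorem siegel_affine_model_general {V : Type*} [AddCommGroup V] [Module ℂ V]
    (B : V →ₗ[ℂ] V →ₛₗ[starRingEnd ℂ] ℂ)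
    (hherm : ∀ v w : V, B w v = starRingEnd ℂ (B v w))
    (δ : ℂ) (hδre : δ.re = 0) (hδim : 0 < δ.im)
    (ℓ ℓ' : V) (hℓ : B ℓ ℓ = 0) (hℓ' : B ℓ' ℓ' = 0) (hne : B ℓ ℓ' ≠ 0)
    (hnegW : ∀ w : V, B w ℓ = 0 → B w ℓ' = 0 → w ≠ 0 → (B w w).re < 0)
    (v : V) (hv : 0 < (B v v).re) :
    B v ℓ ≠ 0
      ∧ (∃! p : ℂ × ℂ × V, p.1 ≠ 0 ∧ B p.2.2 ℓ = 0 ∧ B p.2.2 ℓ' = 0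
          ∧ v = p.1 • zcoord B δ ℓ ℓ' p.2.1 p.2.2)
      ∧ (∀ (c τ : ℂ) (σ : V), c ≠ 0 → B σ ℓ = 0 → B σ ℓ' = 0 →
          v = c • zcoord B δ ℓ ℓ' τ σ →
          2 * τ.im * δ.im * ‖B ℓ' ℓ‖ ^ 2 > -((B σ σ).re)) := by
  have hK : B ℓ' ℓ ≠ 0 := fun h ↦ hne (by rw [hherm, h, map_zero])
  have hδ : δ ≠ 0 := fun h ↦ by simp [h] at hδim
  have hvℓ := apply_ne_zero_of_re_pos B hherm hℓ hne hnegW hv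
  refine ⟨hvℓ, ?_, ?_⟩
  · obtain ⟨c, τ, σ, hc, hσℓ, hσℓ', rfl⟩ := exists_eq_smul_zcoord B hℓ hℓ' hK hne hδ hvℓ
    refine ⟨(c, τ, σ), ⟨hc, hσℓ, hσℓ', rfl⟩, ?_⟩
    rintro ⟨c', τ', σ'⟩ ⟨-, hσℓ₂, hσℓ₂', h⟩
    obtain ⟨rfl, rfl, rfl⟩ := eq_of_smul_zcoord_eq B hℓ hℓ' hK hne hδ hc hσℓ hσℓ' hσℓ₂ hσℓ₂' h
    rfl
  · rintro c τ σ hc hσℓ hσℓ' rfl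
    rw [re_apply_smul_self, re_zcoord_apply_self B hherm hδre hℓ hℓ' hσℓ hσℓ'] at hv
    linarith [pos_of_mul_pos_right hv (normSq_nonneg c)]

/-- The Siegel domain is an affine model of the positive cone: if the restriction
of the form to `W = ℓ^⊥ ∩ ℓ'^⊥` is negative definite, then every `v` with
`⟨v,v⟩ > 0` satisfies `⟨v,ℓ⟩ ≠ 0`, there exist unique `c ≠ 0`, `τ ∈ ℂ`, `σ ∈ W`
with `v = c·z(τ,σ)`, and necessarily `2·Im τ·|δ|·|⟨ℓ',ℓ⟩|² > −⟨σ,σ⟩`. -/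
theorem siegel_affine_model {V : Type*} [AddCommGroup V] [Module ℂ V]
    [FiniteDimensional ℂ V]
    (B : V →ₗ[ℂ] V →ₛₗ[starRingEnd ℂ] ℂ)
    (hherm : ∀ v w : V, B w v = starRingEnd ℂ (B v w))
    (δ : ℂ) (hδre : δ.re = 0) (hδim : 0 < δ.im)
    (ℓ ℓ' : V) (hℓ : B ℓ ℓ = 0) (hℓ' : B ℓ' ℓ' = 0) (hne : B ℓ ℓ' ≠ 0)
    (hnegW : ∀ w : V, B w ℓ = 0 → B w ℓ' = 0 → w ≠ 0 → (B w w).re < 0)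
    (v : V) (hv : 0 < (B v v).re) :
    B v ℓ ≠ 0
      ∧ (∃! p : ℂ × ℂ × V, p.1 ≠ 0 ∧ B p.2.2 ℓ = 0 ∧ B p.2.2 ℓ' = 0
          ∧ v = p.1 • zcoord B δ ℓ ℓ' p.2.1 p.2.2)
      ∧ (∀ (c τ : ℂ) (σ : V), c ≠ 0 → B σ ℓ = 0 → B σ ℓ' = 0 →
          v = c • zcoord B δ ℓ ℓ' τ σ →
          2 * τ.im * δ.im * ‖B ℓ' ℓ‖ ^ 2 > -((B σ σ).re)) :=
  siegel_affine_model_general B hherm δ hδre hδim ℓ ℓ' hℓ hℓ' hne hnegW v hv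
end

section
/- The local Borcherds product converges absolutely: for every w ∈ ℂ, the family indexed by q ∈ ℤ whose q-th member is the finite product ∏_{p=0}^{m−1} (1 − e(σ(q)(w + (p + qζ)/m))) is multipliable in ℂ; hence Ψ(w) is a well-defined complex number. -/
/-!
Since `e` is a character, the `q`-th factor of the `p`-th family is `1 - e(σ(q) a) e(τ)^|q|`
with `a = w + p/m` and `τ = ζ/m`; as `|e(τ)| < 1`, the terms `e(σ(q) a) e(τ)^|q|` form two
geometric series, so each of the `m` families is multipliable, and so is their finite product.
-/

open Complex

/-- `e(x) = exp(2πix)`. -/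
noncomputable def ee (x : ℂ) : ℂ := Complex.exp (2 * Real.pi * Complex.I * x)

/-- The sign `σ(q)`: `1` for `q ≥ 0` and `−1` for `q < 0`. -/
def sgn (q : ℤ) : ℂ := if 0 ≤ q then 1 else -1

/-- The `q`-th member of the local Borcherds product:
`∏_{p=0}^{m−1} (1 − e(σ(q)(w + (p + qζ)/m)))`. -/
noncomputable def psiTerm (m : ℕ) (ζ : ℂ) (w : ℂ) (q : ℤ) : ℂ :=
  ∏ p ∈ Finset.range m, (1 - ee (sgn q * (w + ((p : ℂ) + (q : ℂ) * ζ) / (m : ℂ))))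

/-- The local Borcherds product `Ψ(w)`. -/
noncomputable def Psi (m : ℕ) (ζ : ℂ) (w : ℂ) : ℂ := ∏' q : ℤ, psiTerm m ζ w q

lemma ee_add (a b : ℂ) : ee (a + b) = ee a * ee b := by
  simp only [ee, mul_add, Complex.exp_add]

lemma ee_nat_mul (n : ℕ) (a : ℂ) : ee (n * a) = ee a ^ n := by
  rw [ee, ee, ← Complex.exp_nat_mul]
  ring_nf

lemma norm_ee_lt_one {τ : ℂ} (hτ : 0 < τ.im) : ‖ee τ‖ < 1 := by
  rw [ee, Complex.norm_exp, Real.exp_lt_one_iff]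
  simpa [Complex.mul_re] using mul_pos Real.two_pi_pos hτ

lemma summable_ee_sgn_mul {τ : ℂ} (hτ : 0 < τ.im) (a : ℂ) :
    Summable fun q : ℤ => ee (sgn q * (a + q * τ)) := by
  have hgeom := summable_geometric_of_norm_lt_one (norm_ee_lt_one hτ)
  refine .of_nat_of_neg_add_one ?_ ?_
  · refine (hgeom.mul_left (ee a)).congr fun n => ?_
    have hsgn : sgn (n : ℤ) = 1 := if_pos n.cast_nonneg
    rw [hsgn, one_mul, Int.cast_natCast, ee_add, ee_nat_mul]
  · refine (hgeom.mul_left (ee (-a) * ee τ)).congr fun n => ?_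
    have hsgn : sgn (-(n + 1 : ℤ)) = -1 := if_neg (by omega)
    have harg : -1 * (a + ((-(n + 1) : ℤ) : ℂ) * τ) = -a + τ + n * τ := by
      push_cast; ring
    rw [hsgn, harg, ee_add, ee_add, ee_nat_mul, mul_assoc]

lemma multipliable_one_sub_ee_sgn_mul {τ : ℂ} (hτ : 0 < τ.im) (a : ℂ) :
    Multipliable fun q : ℤ => 1 - ee (sgn q * (a + q * τ)) := by
  simpa only [sub_eq_add_neg] using
    Complex.multipliable_one_add_of_summable (summable_ee_sgn_mul hτ a).neg

/-- The local Borcherds product converges absolutely: the family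
`q ↦ ∏_{p=0}^{m−1} (1 − e(σ(q)(w + (p + qζ)/m)))` is multipliable, hence `Ψ(w)`
is a well-defined complex number. -/
theorem localBorcherds_multipliable (m : ℕ) (hm : 1 ≤ m) (ζ : ℂ) (hζ : 0 < ζ.im)
    (w : ℂ) :
    Multipliable (fun q : ℤ => psiTerm m ζ w q) := by
  have hτ : 0 < (ζ / m).im := by
    rw [Complex.div_natCast_im]
    exact div_pos hζ (by exact_mod_cast hm)
  refine multipliable_prod fun p _ => ?_
  have harg : ∀ q : ℤ, w + ((p : ℂ) + q * ζ) / m = (w + p / m) + q * (ζ / m) := fun q => by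
    ring
  simpa only [harg] using multipliable_one_sub_ee_sgn_mul hτ (w + p / m)
end

section
/- The zero set of the local Borcherds product is exactly the local Heegner divisor: for every w ∈ ℂ, Ψ(w) = 0 if and only if m·w ∈ ℤ + ℤζ. -/
open Complex

lemma tprod_eq_zero_aux {ι : Type*} {f : ι → ℂ} (i : ι) (h : f i = 0) : ∏' j, f j = 0 := by
  have hp : HasProd f 0 := by
    rw [HasProd]
    apply Filter.Tendsto.congr' _ tendsto_const_nhds
    filter_upwards [Filter.eventually_ge_atTop {i}] with s hs
    exact (Finset.prod_eq_zero (hs (Finset.mem_singleton_self i)) h).symm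
  exact hp.tprod_eq

lemma ee_eq_one_iff (x : ℂ) : ee x = 1 ↔ ∃ n : ℤ, x = (n : ℂ) := by
  rw [ee, Complex.exp_eq_one_iff]
  have h2 : (2 * (Real.pi:ℂ) * I) ≠ 0 := by
    simp [Real.pi_ne_zero, Complex.I_ne_zero]
  constructor
  · rintro ⟨n, hn⟩
    refine ⟨n, ?_⟩
    have h3 : 2 * (Real.pi:ℂ) * I * x = 2 * (Real.pi:ℂ) * I * n := by rw [hn]; ring
    exact mul_left_cancel₀ h2 h3
  · rintro ⟨n, rfl⟩
    exact ⟨n, by ring⟩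

lemma ee_int (n : ℤ) : ee (n : ℂ) = 1 := (ee_eq_one_iff _).2 ⟨n, rfl⟩

lemma abs_ee (x : ℂ) : ‖ee x‖ = Real.exp (-(2 * Real.pi * x.im)) := by
  rw [ee, Complex.norm_exp]
  congr 1
  simp [Complex.mul_re, Complex.mul_im]

lemma im_arg (m : ℕ) (hm : 1 ≤ m) (ζ w : ℂ) (q : ℤ) (p : ℕ) :
    (w + ((p : ℂ) + (q : ℂ) * ζ) / (m : ℂ)).im = w.im + q * ζ.im / m := by
  have hm0 : (m:ℝ) ≠ 0 := by positivity
  simp [Complex.add_im, Complex.div_im, Complex.mul_im, Complex.mul_re, Complex.normSq]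
  field_simp

lemma sgn_mul_self (q : ℤ) : sgn q * sgn q = 1 := by
  rw [sgn]; split <;> norm_num

set_option maxHeartbeats 1000000 in
/-- The zero set of the local Borcherds product is exactly the local Heegner
divisor: `Ψ(w) = 0` iff `m·w ∈ ℤ + ℤζ`. -/
theorem localBorcherds_zeros (m : ℕ) (hm : 1 ≤ m) (ζ : ℂ) (hζ : 0 < ζ.im) (w : ℂ) :
    Psi m ζ w = 0 ↔ ∃ a b : ℤ, (m : ℂ) * w = (a : ℂ) + (b : ℂ) * ζ := by
  have hmR : (0:ℝ) < m := by exact_mod_cast hm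
  have hmC : (m:ℂ) ≠ 0 := Nat.cast_ne_zero.2 (by omega)
  constructor
  · intro h
    by_contra hc
    push_neg at hc
    -- set up notation
    set K := Real.exp (2 * Real.pi * |w.im|) with hK
    set r := Real.exp (-(2 * Real.pi * ζ.im / m)) with hr
    have hr0 : 0 < r := Real.exp_pos _
    have hr1 : r < 1 := by
      rw [hr, Real.exp_lt_one_iff]
      have : 0 < 2 * Real.pi * ζ.im / m := by positivity
      linarith
    set F : ℤ × Fin m → ℂ :=
      fun x => 1 - ee (sgn x.1 * (w + ((x.2 : ℕ) + (x.1 : ℂ) * ζ) / (m : ℂ))) with hF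
    -- pointwise bound
    have habs : ∀ (q : ℤ) (p : ℕ),
        ‖ee (sgn q * (w + ((p:ℂ) + (q:ℂ) * ζ) / (m:ℂ)))‖ ≤ K * r ^ q.natAbs := by
      intro q p
      set σ : ℝ := if 0 ≤ q then 1 else -1 with hσ
      have hσq : σ * q = q.natAbs := by
        rw [hσ]; split_ifs with hq
        · rw [one_mul, Nat.cast_natAbs, _root_.abs_of_nonneg hq]
        · rw [neg_one_mul, Nat.cast_natAbs, _root_.abs_of_nonpos (by omega : q ≤ 0)]
          push_cast; ring
      have hsplit : (sgn q * (w + ((p:ℂ) + (q:ℂ) * ζ) / (m:ℂ))).im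
          = σ * (w.im + q * ζ.im / m) := by
        rw [hσ, sgn]
        split_ifs with hq <;>
          simp [neg_one_mul, Complex.neg_im, im_arg m hm ζ w q p]
      rw [abs_ee, hsplit]
      have hexp : -(2 * Real.pi * (σ * (w.im + q * ζ.im / m)))
          = -(2 * Real.pi * (σ * w.im)) + (q.natAbs : ℝ) * (-(2 * Real.pi * ζ.im / m)) := by
        rw [← hσq]; ring
      rw [hexp, Real.exp_add, Real.exp_nat_mul]
      have h1 : Real.exp (-(2 * Real.pi * (σ * w.im))) ≤ K := by
        rw [hK]; apply Real.exp_le_exp.2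
        have hpi := Real.pi_pos
        rw [hσ]; split
        · nlinarith [neg_abs_le w.im, le_abs_self w.im]
        · nlinarith [neg_abs_le w.im, le_abs_self w.im]
      exact mul_le_mul_of_nonneg_right h1 (pow_nonneg hr0.le _)
    -- summability of the bound
    have hsumZ : Summable (fun q : ℤ => K * r ^ q.natAbs) := by
      apply Summable.of_nat_of_neg_add_one
      · apply Summable.congr ((summable_geometric_of_lt_one hr0.le hr1).mul_left K)
        intro n; simp
      · apply Summable.congr (((summable_geometric_of_lt_one hr0.le hr1).mul_left (K * r)))
        intro n
        have : ((-(n+1) : ℤ)).natAbs = n + 1 := by omega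
        rw [this, pow_succ]; ring
    have hS2 : Summable (fun x : ℤ × Fin m => K * r ^ x.1.natAbs) := by
      refine (summable_prod_of_nonneg ?_).2 ⟨fun q => Summable.of_finite, ?_⟩
      · intro x; positivity
      · refine Summable.congr (hsumZ.mul_left (m:ℝ)) fun q => ?_
        rw [tsum_fintype]
        simp only [Finset.sum_const, Finset.card_univ, Fintype.card_fin, nsmul_eq_mul]
    -- all factors nonzero
    have hne : ∀ x : ℤ × Fin m, F x ≠ 0 := by
      intro x hx0
      rw [hF, sub_eq_zero] at hx0
      obtain ⟨n, hn⟩ := (ee_eq_one_iff _).1 hx0.symm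
      have hz : w + (((x.2 : ℕ) : ℂ) + (x.1 : ℂ) * ζ) / (m:ℂ) = sgn x.1 * n := by
        have h3 := congrArg (fun t => sgn x.1 * t) hn
        rw [← mul_assoc, sgn_mul_self, one_mul] at h3
        exact h3
      have hz' : (m:ℂ) * w + (((x.2 : ℕ) : ℂ) + (x.1 : ℂ) * ζ) = (m:ℂ) * (sgn x.1 * n) := by
        rw [← hz, mul_add, mul_div_cancel₀ _ hmC]
      rcases le_or_gt 0 x.1 with hq | hq
      · apply hc (n * m - x.2) (-x.1)
        have hs : sgn x.1 = 1 := by rw [sgn, if_pos hq]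
        rw [hs] at hz'
        push_cast
        linear_combination hz'
      · apply hc (-(n * m) - x.2) (-x.1)
        have hs : sgn x.1 = -1 := by rw [sgn, if_neg (by omega)]
        rw [hs] at hz'
        push_cast
        linear_combination hz'
    -- summability of logs
    have hhalf : ∀ᶠ x : ℤ × Fin m in Filter.cofinite, K * r ^ x.1.natAbs < 1/2 :=
      hS2.tendsto_cofinite_zero.eventually (gt_mem_nhds (by norm_num))
    have hS3 : Summable (fun x : ℤ × Fin m => 3/2 * (K * r ^ x.1.natAbs)) := hS2.mul_left _
    have hlog : Summable fun x => Complex.log (F x) := by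
      refine Summable.of_norm_bounded_eventually hS3 ?_
      filter_upwards [hhalf] with x hx
      have h1 := habs x.1 x.2
      have h2 : ‖-(ee (sgn x.1 * (w + (((x.2:ℕ):ℂ) + (x.1:ℂ) * ζ) / (m:ℂ))))‖ ≤ 1/2 := by
        rw [norm_neg]
        exact le_trans h1 hx.le
      have h3 := Complex.norm_log_one_add_half_le_self h2
      have h4 : F x = 1 + -(ee (sgn x.1 * (w + (((x.2:ℕ):ℂ) + (x.1:ℂ) * ζ) / (m:ℂ)))) := by
        rw [hF]; ring
      rw [h4]
      refine le_trans h3 ?_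
      rw [norm_neg]
      nlinarith [norm_nonneg (ee (sgn x.1 * (w + (((x.2:ℕ):ℂ) + (x.1:ℂ) * ζ) / (m:ℂ))))]
    have hprod : HasProd F (Complex.exp (∑' x, Complex.log (F x))) := by
      have h6 := hlog.hasSum.cexp
      rwa [show Complex.exp ∘ (fun x => Complex.log (F x)) = F from
        funext fun x => Complex.exp_log (hne x)] at h6
    have hmul : Multipliable F := hprod.multipliable
    have hFne : (∏' x, F x) ≠ 0 := by
      rw [hprod.tprod_eq]; exact Complex.exp_ne_zero _
    have hterm : ∀ q, psiTerm m ζ w q = ∏' p : Fin m, F (q, p) := by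
      intro q
      rw [tprod_fintype, psiTerm, ← Fin.prod_univ_eq_prod_range]
    have hPsi : Psi m ζ w = ∏' x : ℤ × Fin m, F x := by
      have h7 : (∏' x : ℤ × Fin m, F x) = ∏' q : ℤ, ∏' p : Fin m, F (q, p) :=
        Multipliable.tprod_prod' hmul (fun q => Multipliable.of_finite)
      rw [Psi, h7]
      exact tprod_congr hterm
    rw [hPsi] at h
    exact hFne h
  · rintro ⟨a, b, hab⟩
    set p : ℕ := ((-a) % m).toNat with hp
    have hm0 : (0:ℤ) < m := by exact_mod_cast hm
    have hpz : (p : ℤ) = (-a) % m := Int.toNat_of_nonneg (Int.emod_nonneg _ (by omega))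
    have hplt : p < m := by
      have := Int.emod_lt_of_pos (-a) hm0
      omega
    set k : ℤ := -((-a) / m) with hk
    have hak : (a:ℤ) + p = m * k := by
      rw [hpz, hk, Int.emod_def]; ring
    have harg : w + ((p:ℂ) + ((-b : ℤ) : ℂ) * ζ) / (m:ℂ) = (k:ℂ) := by
      have hakC : (a:ℂ) + (p:ℂ) = (m:ℂ) * (k:ℂ) := by exact_mod_cast hak
      field_simp
      push_cast
      linear_combination hab + hakC
    have hfac : 1 - ee (sgn (-b) * (w + ((p:ℂ) + ((-b : ℤ) : ℂ) * ζ) / (m:ℂ))) = 0 := by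
      rw [harg, sub_eq_zero, sgn]
      split
      · rw [one_mul, ee_int]
      · rw [show (-1 : ℂ) * (k:ℂ) = ((-k : ℤ) : ℂ) by push_cast; ring, ee_int]
    have hterm0 : psiTerm m ζ w (-b) = 0 := by
      rw [psiTerm]
      refine Finset.prod_eq_zero (Finset.mem_range.2 hplt) ?_
      convert hfac using 4
    exact tprod_eq_zero_aux (-b) hterm0
end

section
/- The imaginary part of a hermitian form is an explicit coboundary (Proposition 2.1, hermitian case): define u : W × W → ℂ by u(t,σ) := (2i)⁻¹·(2H(σ,t)/c + H(t,t)). Then for all t, t', σ ∈ W: u(t', σ + c·t) − u(t + t', σ) + u(t, σ) = Im H(t,t'). -/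
open Complex

/-- The imaginary part of a hermitian form is an explicit coboundary: with
`u(t,σ) = (2i)⁻¹(2H(σ,t)/c + H(t,t))` one has
`u(t', σ + c·t) − u(t+t', σ) + u(t, σ) = Im H(t,t')`. -/
theorem hermitian_coboundary {W : Type*} [AddCommGroup W] [Module ℂ W]
    (H : W →ₗ[ℂ] W →ₛₗ[starRingEnd ℂ] ℂ)
    (hherm : ∀ x y : W, H y x = starRingEnd ℂ (H x y))
    (c : ℂ) (hc : c ≠ 0)
    (u : W → W → ℂ)
    (hu : ∀ t σ : W, u t σ = (2 * Complex.I)⁻¹ * (2 * H σ t / c + H t t))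
    (t t' σ : W) :
    u t' (σ + c • t) - u (t + t') σ + u t σ = ((H t t').im : ℂ) := by
  have shift : H (σ + c • t) t' / c = H σ t' / c + H t t' := by
    rw [map_add, map_smul, LinearMap.add_apply, LinearMap.smul_apply, smul_eq_mul, add_div,
      mul_div_cancel_left₀ _ hc]
  have diag : H (t + t') (t + t') = H t t + H t t' + H t' t + H t' t' := by
    simp only [map_add, LinearMap.add_apply]
    ring
  have cross : H σ (t + t') = H σ t + H σ t' := map_add _ _ _
  -- The shift by `c • t` contributes `2 H(t,t')`, expanding `H(t+t',t+t')` removes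
  -- `H(t,t') + H(t',t)`, and `H(t,t') - conj H(t,t') = 2i Im H(t,t')`.
  rw [im_eq_sub_conj, ← hherm, hu, hu, hu, mul_div_assoc, shift, diag, cross]
  ring
end

section
/- The imaginary part of a symmetric complex bilinear form is an explicit coboundary (Proposition 2.1, bilinear case): define u : W × W → ℂ by u(t,σ) := (2i)⁻¹·(G(σ,t)/c + conj(G(t,t))/2). Then for all t, t', σ ∈ W: u(t', σ + c·t) − u(t + t', σ) + u(t, σ) = Im G(t,t'). -/
/-! The `G(σ,t)/c` part of `u` contributes `G(t,t')` to the coboundary (bilinearity, `c ≠ 0`),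
the `conj(G(t,t))/2` part contributes `-conj(G(t,t'))` (polarization, symmetry), and
`(z - conj z)/(2i) = Im z`. -/

open Complex

/-- The imaginary part of a symmetric complex bilinear form is an explicit
coboundary: with `u(t,σ) = (2i)⁻¹(G(σ,t)/c + conj(G(t,t))/2)` one has
`u(t', σ + c·t) − u(t+t', σ) + u(t, σ) = Im G(t,t')`. -/
theorem bilinear_coboundary {W : Type*} [AddCommGroup W] [Module ℂ W]
    (G : W →ₗ[ℂ] W →ₗ[ℂ] ℂ)
    (hsymm : ∀ x y : W, G x y = G y x)
    (c : ℂ) (hc : c ≠ 0)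
    (u : W → W → ℂ)
    (hu : ∀ t σ : W, u t σ
      = (2 * Complex.I)⁻¹ * (G σ t / c + starRingEnd ℂ (G t t) / 2))
    (t t' σ : W) :
    u t' (σ + c • t) - u (t + t') σ + u t σ = ((G t t').im : ℂ) := by
  have hlinear : G (σ + c • t) t' / c - G σ (t + t') / c + G σ t / c = G t t' := by
    simp only [map_add, map_smul, LinearMap.add_apply, LinearMap.smul_apply, smul_eq_mul]
    field_simp
    ring
  have hquadratic : starRingEnd ℂ (G (t + t') (t + t')) / 2
      = starRingEnd ℂ (G t t) / 2 + starRingEnd ℂ (G t' t') / 2 + starRingEnd ℂ (G t t') := by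
    simp only [map_add, LinearMap.add_apply, hsymm t' t]
    ring
  rw [hu, hu, hu, hquadratic, im_eq_sub_conj, ← hlinear]
  ring
end

section
/- Torsion criterion in the cohomology of the Heisenberg group (Lemma 2.2): assume ω is antisymmetric (ω(t,t') = −ω(t',t)) and let B : Λ × Λ → ℤ be bi-additive and antisymmetric. Then the 2-cocycle c_B on Γ = ℤ ×_ω Λ is a 2-coboundary if and only if B = k·ω for some k ∈ ℤ. Consequently, there exists an integer m ≥ 1 such that m·c_B is a 2-coboundary if and only if B and ω are linearly dependent over ℤ. -/
/-!
A primitive `u` of `c_B` is additive on the centre `ℤ × {0}`, so `u (a, 0) = a * λ`, and since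
`(0, t) (a, 0) = (a, t)`, also `u (a, t) = u (0, t) + a * λ`. The products `g g'` and `g' g` of
`g = (0, t)`, `g' = (0, t')` differ only in the central coordinate `±ω(t,t')`, so subtracting
the coboundary equations for `(g, g')` and `(g', g)` gives `2 B = -2 λ ω`. Conversely
`u (a, t) = -k a` is a primitive of `c_{kω}`. The torsion statement is the first part for `m B`.
-/

/-- Multiplication of the Heisenberg group `Γ = ℤ ×_ω Λ`:
`(a,t)·(a',t') = (a + a' + ω(t,t'), t + t')`. -/
def heisMul {Λ : Type*} [AddCommGroup Λ] (ω : Λ → Λ → ℤ) (g g' : ℤ × Λ) : ℤ × Λ :=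
  (g.1 + g'.1 + ω g.2 g'.2, g.2 + g'.2)

namespace Heisenberg

variable {Λ : Type*} [AddCommGroup Λ]

def IsCoboundary (ω : Λ → Λ → ℤ) (c : ℤ × Λ → ℤ × Λ → ℤ) : Prop :=
  ∃ u : ℤ × Λ → ℤ, ∀ g g' : ℤ × Λ, c g g' = u g + u g' - u (heisMul ω g g')

lemma apply_zero_right_of_add_right {f : Λ → Λ → ℤ}
    (hf : ∀ s t t' : Λ, f s (t + t') = f s t + f s t') (s : Λ) : f s 0 = 0 := by
  simpa using hf s 0 0

lemma isCoboundary_of_eq_mul {ω B : Λ → Λ → ℤ} (k : ℤ) (h : ∀ t t' : Λ, B t t' = k * ω t t') :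
    IsCoboundary ω (fun g g' => B g.2 g'.2) :=
  ⟨fun g => -k * g.1, fun g g' => by simp only [heisMul, h]; ring⟩

section Primitive

variable {ω B : Λ → Λ → ℤ} {u : ℤ × Λ → ℤ}

lemma primitive_center_eq_mul (hω0 : ∀ t, ω t 0 = 0) (hB0 : ∀ t, B t 0 = 0)
    (hu : ∀ g g' : ℤ × Λ, B g.2 g'.2 = u g + u g' - u (heisMul ω g g')) (a : ℤ) :
    u (a, 0) = a * u (1, 0) := by
  let f : ℤ →+ ℤ := AddMonoidHom.mk' (fun a => u (a, 0)) fun a a' => by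
    have h := hu (a, 0) (a', 0)
    simp only [heisMul, hω0, hB0, add_zero] at h
    linarith
  exact (f.apply_int (n := a)).trans (smul_eq_mul _ _)

lemma primitive_eq_add_center (hω0 : ∀ t, ω t 0 = 0) (hB0 : ∀ t, B t 0 = 0)
    (hu : ∀ g g' : ℤ × Λ, B g.2 g'.2 = u g + u g' - u (heisMul ω g g')) (a : ℤ) (t : Λ) :
    u (a, t) = u (0, t) + a * u (1, 0) := by
  have h := hu (0, t) (a, 0)
  simp only [heisMul, hω0, hB0, zero_add, add_zero] at h
  rw [← primitive_center_eq_mul hω0 hB0 hu]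
  linarith

lemma eq_mul_of_isCoboundary (hω0 : ∀ t, ω t 0 = 0) (hB0 : ∀ t, B t 0 = 0)
    (hω_anti : ∀ t t' : Λ, ω t t' = -ω t' t) (hB_anti : ∀ t t' : Λ, B t t' = -B t' t)
    (hB : IsCoboundary ω (fun g g' => B g.2 g'.2)) :
    ∃ k : ℤ, ∀ t t' : Λ, B t t' = k * ω t t' := by
  obtain ⟨u, hu⟩ := hB
  refine ⟨-u (1, 0), fun t t' => ?_⟩
  have hgg' := hu (0, t) (0, t')
  have hg'g := hu (0, t') (0, t)
  simp only [heisMul, zero_add, add_comm t' t] at hgg' hg'g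
  rw [primitive_eq_add_center hω0 hB0 hu _ (t + t')] at hgg' hg'g
  rw [hB_anti t' t, hω_anti t' t] at hg'g
  linarith

end Primitive

end Heisenberg

open Heisenberg in
theorem heisenberg_torsion_criterion_general {Λ : Type*} [AddCommGroup Λ]
    (ω : Λ → Λ → ℤ)
    (hω_addr : ∀ s t t' : Λ, ω s (t + t') = ω s t + ω s t')
    (hω_anti : ∀ t t' : Λ, ω t t' = -ω t' t)
    (B : Λ → Λ → ℤ)
    (hB_addr : ∀ s t t' : Λ, B s (t + t') = B s t + B s t')
    (hB_anti : ∀ t t' : Λ, B t t' = -B t' t) :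
    ((∃ u : ℤ × Λ → ℤ, ∀ g g' : ℤ × Λ,
          B g.2 g'.2 = u g + u g' - u (heisMul ω g g'))
        ↔ ∃ k : ℤ, ∀ t t' : Λ, B t t' = k * ω t t')
      ∧ ((∃ m : ℕ, 1 ≤ m ∧ ∃ u : ℤ × Λ → ℤ, ∀ g g' : ℤ × Λ,
            (m : ℤ) * B g.2 g'.2 = u g + u g' - u (heisMul ω g g'))
          ↔ ∃ a b : ℤ, b ≠ 0 ∧ ∀ t t' : Λ, b * B t t' = a * ω t t') := by
  have hω0 := apply_zero_right_of_add_right hω_addr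
  have hB0 := apply_zero_right_of_add_right hB_addr
  refine ⟨⟨eq_mul_of_isCoboundary hω0 hB0 hω_anti hB_anti,
    fun ⟨k, hk⟩ => isCoboundary_of_eq_mul k hk⟩, ⟨?_, ?_⟩⟩
  · rintro ⟨m, hm, hmB⟩
    obtain ⟨k, hk⟩ := eq_mul_of_isCoboundary (B := fun t t' => (m : ℤ) * B t t') hω0
      (by simp [hB0]) hω_anti (fun t t' => by rw [hB_anti]; ring) hmB
    exact ⟨k, m, by omega, hk⟩
  · rintro ⟨a, b, hb, hab⟩
    refine ⟨b.natAbs, Int.natAbs_pos.mpr hb, isCoboundary_of_eq_mul (ω := ω)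
      (B := fun t t' => (b.natAbs : ℤ) * B t t') (b.sign * a) fun t t' => ?_⟩
    rw [← Int.sign_mul_self_eq_natAbs, mul_assoc, hab, mul_assoc]

/-- Torsion criterion in the cohomology of the Heisenberg group: for `ω`
bi-additive antisymmetric and `B` bi-additive antisymmetric, the 2-cocycle
`c_B((a,t),(a',t')) = B(t,t')` on `Γ = ℤ ×_ω Λ` is a 2-coboundary iff `B = k·ω`
for some `k ∈ ℤ`; and some positive multiple `m·c_B` is a 2-coboundary iff
`B` and `ω` are linearly dependent over `ℤ`. -/
theorem heisenberg_torsion_criterion {Λ : Type*} [AddCommGroup Λ]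
    (ω : Λ → Λ → ℤ)
    (hω_addl : ∀ s t t' : Λ, ω (t + t') s = ω t s + ω t' s)
    (hω_addr : ∀ s t t' : Λ, ω s (t + t') = ω s t + ω s t')
    (hω_anti : ∀ t t' : Λ, ω t t' = -ω t' t)
    (B : Λ → Λ → ℤ)
    (hB_addl : ∀ s t t' : Λ, B (t + t') s = B t s + B t' s)
    (hB_addr : ∀ s t t' : Λ, B s (t + t') = B s t + B s t')
    (hB_anti : ∀ t t' : Λ, B t t' = -B t' t) :
    ((∃ u : ℤ × Λ → ℤ, ∀ g g' : ℤ × Λ,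
          B g.2 g'.2 = u g + u g' - u (heisMul ω g g'))
        ↔ ∃ k : ℤ, ∀ t t' : Λ, B t t' = k * ω t t')
      ∧ ((∃ m : ℕ, 1 ≤ m ∧ ∃ u : ℤ × Λ → ℤ, ∀ g g' : ℤ × Λ,
            (m : ℤ) * B g.2 g'.2 = u g + u g' - u (heisMul ω g g'))
          ↔ ∃ a b : ℤ, b ≠ 0 ∧ ∀ t t' : Λ, b * B t t' = a * ω t t') :=
  heisenberg_torsion_criterion_general ω hω_addr hω_anti B hB_addr hB_anti
end
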